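/- Let k ≥ 2 be an integer and let n ≥ 3k. Then the (k−1)-total bondage number of the wheel graph W_n equals k: b_t^{k−1}(W_n) = k. -/

import Mathlib

open SimpleGraph

/-- A set `S` of vertices is a total dominating set of `G` if every vertex of `G`
is adjacent to at least one vertex of `S`. -/
def IsTotalDominatingSet {V : Type*} (G : SimpleGraph V) (S : Set V) : Prop :=
  ∀ v : V, ∃ u ∈ S, G.Adj v u

/-- The total domination number of `G`: the minimum cardinality of a total
dominating set of `G`. -/
noncomputable def totalDominationNumber {V : Type*} (G : SimpleGraph V) : ℕ :=
  sInf {n : ℕ | ∃ S : Set V, S.ncard = n ∧ IsTotalDominatingSet G S}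

/-- A graph has no isolated vertices if every vertex has a neighbor. -/
def NoIsolatedVerts {V : Type*} (G : SimpleGraph V) : Prop :=
  ∀ v : V, ∃ u : V, G.Adj v u

/-- The `k`-total bondage number of `G`: the minimum cardinality of a set `F` of
edges of `G` such that `G − F` has no isolated vertices and the total domination
number of `G − F` is at least `γ_t(G) + k`. -/
noncomputable def kTotalBondage {V : Type*} (G : SimpleGraph V) (k : ℕ) : ℕ :=
  sInf {m : ℕ | ∃ F : Set (Sym2 V), F ⊆ G.edgeSet ∧ F.ncard = m ∧
    NoIsolatedVerts (G.deleteEdges F) ∧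
    totalDominationNumber G + k ≤ totalDominationNumber (G.deleteEdges F)}

/-- The wheel graph `W_n` on `n + 1` vertices: a hub vertex (`none`) joined to
every vertex of a cycle `C_n` (the vertices `some i`). -/
def wheelGraph (n : ℕ) : SimpleGraph (Option (Fin n)) :=
  SimpleGraph.fromRel (fun v w =>
    v = none ∨ ∃ i j : Fin n, v = some i ∧ w = some j ∧ (cycleGraph n).Adj i j)

/-!
`γ_t(W_n) = 2`, witnessed by the hub and any rim vertex.

Deleting the `k` spokes at the rim vertices `3i + 1` (`i < k`) raises `γ_t` to at least `k + 1`: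
each of these vertices needs its own rim neighbour (`3i` or `3i + 2`) in a total dominating set
`S`, so `S` has at least `k` rim vertices, and if `S` avoids the hub then its rim part totally
dominates `C_n`, which forces `|S| ≥ n / 2 ≥ 3k / 2 > k`.

Conversely, let `F` leave no vertex isolated and let `D` be the rim vertices whose spokes lie in
`F`. The hub, a rim vertex `p ∉ D` and one rim neighbour of each `d ∈ D` totally dominate
`W_n - F`. If `D ≠ ∅`, some `j ∈ D` has `j + 1 ∉ D`: either the rim edge `j (j + 1)` lies in `F`
too, so `|D| < |F|`, or `j + 1` serves both as `p` and as the neighbour of `j`. Hence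
`γ_t(W_n - F) ≤ max 2 (|F| + 1)`, and raising `γ_t` by `k - 1` costs at least `k` edges.
-/

theorem totalDominationNumber_le_ncard {V : Type*} {G : SimpleGraph V} {S : Set V}
    (hS : IsTotalDominatingSet G S) : totalDominationNumber G ≤ S.ncard :=
  Nat.sInf_le ⟨S, rfl, hS⟩

theorem le_totalDominationNumber {V : Type*} {G : SimpleGraph V} {m : ℕ}
    (hG : NoIsolatedVerts G) (h : ∀ S, IsTotalDominatingSet G S → m ≤ S.ncard) :
    m ≤ totalDominationNumber G := by
  refine le_csInf ⟨_, Set.univ, rfl, fun v => (hG v).imp fun _ h => ⟨trivial, h⟩⟩ ?_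
  rintro _ ⟨S, rfl, hS⟩
  exact h S hS

theorem two_le_ncard_of_isTotalDominatingSet {V : Type*} [Finite V] [Nonempty V]
    {G : SimpleGraph V} {S : Set V} (hS : IsTotalDominatingSet G S) : 2 ≤ S.ncard := by
  obtain ⟨u, hu, -⟩ := hS (Classical.arbitrary V)
  obtain ⟨w, hw, huw⟩ := hS u
  rw [← Set.ncard_pair huw.ne]
  exact Set.ncard_le_ncard (Set.insert_subset hu (Set.singleton_subset_iff.2 hw))

theorem card_le_mul_ncard_of_isTotalDominatingSet {V : Type*} [Fintype V] {G : SimpleGraph V}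
    [DecidableRel G.Adj] {d : ℕ} (hd : ∀ v, G.degree v ≤ d) {S : Set V}
    (hS : IsTotalDominatingSet G S) : Fintype.card V ≤ d * S.ncard := by
  classical
  calc Fintype.card V ≤ (S.toFinset.biUnion fun u => G.neighborFinset u).card := by
        refine Finset.card_le_card fun v _ => ?_
        obtain ⟨u, hu, hvu⟩ := hS v
        exact Finset.mem_biUnion.2
          ⟨u, Set.mem_toFinset.2 hu, (G.mem_neighborFinset u v).2 hvu.symm⟩
    _ ≤ ∑ u ∈ S.toFinset, G.degree u := Finset.card_biUnion_le
    _ ≤ S.toFinset.card • d := Finset.sum_le_card_nsmul _ _ _ fun u _ => hd u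
    _ = d * S.ncard := by rw [Set.ncard_eq_toFinset_card', smul_eq_mul, mul_comm]

section

variable {n : ℕ}

theorem cycleGraph_degree_le_two (v : Fin n) : (cycleGraph n).degree v ≤ 2 := by
  match n with
  | 0 => exact v.elim0
  | 1 => exact ((cycleGraph 1).degree_lt_card_verts v).le.trans (by simp)
  | _ + 2 => exact cycleGraph_degree_two_le.trans_le Finset.card_le_two

theorem cycleGraph_adj_iff_val (hn : 2 ≤ n) {u v : Fin n} :
    (cycleGraph n).Adj u v ↔ u.val + 1 = v.val ∨ v.val + 1 = u.val ∨
      (u.val = 0 ∧ v.val + 1 = n) ∨ (v.val = 0 ∧ u.val + 1 = n) := by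
  have := u.isLt
  have := v.isLt
  rw [cycleGraph_adj']
  rcases lt_trichotomy u v with h | rfl | h
  · rw [Fin.sub_val_of_le h.le, Fin.coe_sub_iff_lt.2 h]
    omega
  · rw [Fin.sub_val_of_le le_rfl]
    omega
  · rw [Fin.sub_val_of_le h.le, Fin.coe_sub_iff_lt.2 h]
    omega

theorem cycleGraph_adj_add_one [NeZero n] (hn : 2 ≤ n) (v : Fin n) :
    (cycleGraph n).Adj v (v + 1) := by
  rw [cycleGraph_adj', add_sub_cancel_left, Fin.val_one', Nat.mod_eq_of_lt hn]
  exact Or.inr rfl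

open Fin.NatCast in
theorem Fin.exists_mem_add_one_notMem [NeZero n] {s : Set (Fin n)} (hs : s.Nonempty)
    (hs' : s ≠ Set.univ) : ∃ j ∈ s, j + 1 ∉ s := by
  by_contra! hclosed
  obtain ⟨j, hj⟩ := hs
  have hreach : ∀ t : ℕ, j + (t : Fin n) ∈ s := by
    intro t
    induction t with
    | zero => simpa using hj
    | succ t ih => simpa [add_assoc] using hclosed _ ih
  refine hs' (Set.eq_univ_of_forall fun p => ?_)
  simpa using hreach (p - j).val

theorem wheelGraph_adj_none_some (x : Fin n) : (wheelGraph n).Adj none (some x) := by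
  simp [wheelGraph]

theorem wheelGraph_adj_some_some {x y : Fin n} :
    (wheelGraph n).Adj (some x) (some y) ↔ (cycleGraph n).Adj x y := by
  simp only [wheelGraph, fromRel_adj, ne_eq, Option.some_inj, reduceCtorEq, false_or,
    exists_and_left, exists_eq_left', (cycleGraph n).adj_comm y x, or_self, and_iff_right_iff_imp]
  exact fun h => h.ne

theorem totalDominationNumber_wheelGraph (hn : 0 < n) :
    totalDominationNumber (wheelGraph n) = 2 := by
  have hS : IsTotalDominatingSet (wheelGraph n) {none, some ⟨0, hn⟩} := by
    rintro (_ | x)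
    · exact ⟨some ⟨0, hn⟩, by simp, wheelGraph_adj_none_some _⟩
    · exact ⟨none, by simp, (wheelGraph_adj_none_some x).symm⟩
  refine le_antisymm ?_ ?_
  · simpa using totalDominationNumber_le_ncard hS
  · exact le_totalDominationNumber (fun v => (hS v).imp fun _ h => h.2)
      fun _ => two_le_ncard_of_isTotalDominatingSet

def wheelSpoke (x : Fin n) : Sym2 (Option (Fin n)) := s(none, some x)

theorem wheelSpoke_injective : Function.Injective (wheelSpoke (n := n)) := by
  intro x y h
  simpa [wheelSpoke] using h

theorem wheelSpoke_mem_edgeSet (x : Fin n) : wheelSpoke x ∈ (wheelGraph n).edgeSet :=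
  wheelGraph_adj_none_some x

theorem deleteEdges_wheelGraph_adj_some_none {F : Set (Sym2 (Option (Fin n)))}
    {x : Fin n} : ((wheelGraph n).deleteEdges F).Adj (some x) none ↔ wheelSpoke x ∉ F := by
  rw [deleteEdges_adj, Sym2.eq_swap]
  exact and_iff_right (wheelGraph_adj_none_some x).symm

theorem cycleGraph_adj_of_deleteEdges_wheelGraph_adj {F : Set (Sym2 (Option (Fin n)))}
    {x y : Fin n} (h : ((wheelGraph n).deleteEdges F).Adj (some x) (some y)) :
    (cycleGraph n).Adj x y :=
  wheelGraph_adj_some_some.1 (deleteEdges_adj.1 h).1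

theorem noIsolatedVerts_deleteEdges_wheelSpoke_image (hn : 2 ≤ n) {D : Set (Fin n)}
    (hD : D ≠ Set.univ) : NoIsolatedVerts ((wheelGraph n).deleteEdges (wheelSpoke '' D)) := by
  rintro (_ | x)
  · obtain ⟨p, hp⟩ := (Set.ne_univ_iff_exists_notMem D).1 hD
    refine ⟨some p, (deleteEdges_wheelGraph_adj_some_none.2 ?_).symm⟩
    rwa [wheelSpoke_injective.mem_set_image]
  · have := x.neZero
    refine ⟨some (x + 1), deleteEdges_adj.2
      ⟨wheelGraph_adj_some_some.2 (cycleGraph_adj_add_one hn x), ?_⟩⟩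
    rintro ⟨d, -, hd⟩
    simp [wheelSpoke] at hd

theorem isTotalDominatingSet_cycleGraph_preimage_some
    {F : Set (Sym2 (Option (Fin n)))} {S : Set (Option (Fin n))}
    (hS : IsTotalDominatingSet ((wheelGraph n).deleteEdges F) S) (hnone : none ∉ S) :
    IsTotalDominatingSet (cycleGraph n) (some ⁻¹' S) := by
  intro x
  obtain ⟨_ | y, hy, hxy⟩ := hS (some x)
  · exact absurd hy hnone
  · exact ⟨y, hy, cycleGraph_adj_of_deleteEdges_wheelGraph_adj hxy⟩

theorem le_ncard_preimage_some_of_isTotalDominatingSet_deleteEdges_wheelSpoke {k : ℕ}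
    (hn : 3 * k ≤ n) {f : Fin k → Fin n} (hf : ∀ i, (f i).val = 3 * i + 1)
    {S : Set (Option (Fin n))}
    (hS : IsTotalDominatingSet ((wheelGraph n).deleteEdges (wheelSpoke '' Set.range f)) S) :
    k ≤ (some ⁻¹' S).ncard := by
  -- the rim neighbours of `3i + 1` are `3i` and `3i + 2`, which both lie in block `i`
  have hprivate : ∀ i : Fin k, ∃ r : Fin n, some r ∈ S ∧ r.val / 3 = i.val := by
    intro i
    have := i.isLt
    have := hf i
    obtain ⟨_ | r, hr, hadj⟩ := hS (some (f i))
    · exact absurd ⟨f i, ⟨i, rfl⟩, rfl⟩ (deleteEdges_wheelGraph_adj_some_none.1 hadj)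
    · have hfr := (cycleGraph_adj_iff_val (by omega)).1
        (cycleGraph_adj_of_deleteEdges_wheelGraph_adj hadj)
      exact ⟨r, hr, by omega⟩
  choose r hrS hr using hprivate
  have hinj : Function.Injective r := fun i j h => Fin.ext (by rw [← hr i, ← hr j, h])
  calc k = (Set.range r).ncard := by
        rw [Set.ncard_range_of_injective hinj, Nat.card_eq_fintype_card, Fintype.card_fin]
    _ ≤ (some ⁻¹' S).ncard := Set.ncard_le_ncard (Set.range_subset_iff.2 hrS)

theorem add_one_le_ncard_of_isTotalDominatingSet_deleteEdges_wheelSpoke {k : ℕ} (hk : 2 ≤ k)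
    (hn : 3 * k ≤ n) {f : Fin k → Fin n} (hf : ∀ i, (f i).val = 3 * i + 1)
    {S : Set (Option (Fin n))}
    (hS : IsTotalDominatingSet ((wheelGraph n).deleteEdges (wheelSpoke '' Set.range f)) S) :
    k + 1 ≤ S.ncard := by
  have hrim := le_ncard_preimage_some_of_isTotalDominatingSet_deleteEdges_wheelSpoke hn hf hS
  have hsub : some '' (some ⁻¹' S) ⊆ S := Set.image_preimage_subset _ _
  have hcard : (some '' (some ⁻¹' S)).ncard = (some ⁻¹' S).ncard :=
    Set.ncard_image_of_injective _ (Option.some_injective _)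
  by_cases hnone : none ∈ S
  · calc k + 1 ≤ (some ⁻¹' S).ncard + 1 := by omega
      _ = (insert none (some '' (some ⁻¹' S))).ncard := by
        rw [Set.ncard_insert_of_notMem (by simp), hcard]
      _ ≤ S.ncard := Set.ncard_le_ncard (Set.insert_subset hnone hsub)
  · have hcycle := card_le_mul_ncard_of_isTotalDominatingSet cycleGraph_degree_le_two
      (isTotalDominatingSet_cycleGraph_preimage_some hS hnone)
    rw [Fintype.card_fin] at hcycle
    have := Set.ncard_le_ncard hsub
    omega

theorem totalDominationNumber_deleteEdges_wheelGraph_le_of_dominating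
    {F : Set (Sym2 (Option (Fin n)))} {R : Set (Fin n)} (hR : ∃ p ∈ R, wheelSpoke p ∉ F)
    (hdom : ∀ d, wheelSpoke d ∈ F →
      ∃ r ∈ R, ((wheelGraph n).deleteEdges F).Adj (some d) (some r)) :
    totalDominationNumber ((wheelGraph n).deleteEdges F) ≤ R.ncard + 1 := by
  obtain ⟨p, hpR, hp⟩ := hR
  have hS : IsTotalDominatingSet ((wheelGraph n).deleteEdges F) (insert none (some '' R)) := by
    rintro (_ | x)
    · exact ⟨some p, by simp [hpR], (deleteEdges_wheelGraph_adj_some_none.2 hp).symm⟩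
    · by_cases hx : wheelSpoke x ∈ F
      · obtain ⟨r, hr, hxr⟩ := hdom x hx
        exact ⟨some r, by simp [hr], hxr⟩
      · exact ⟨none, by simp, deleteEdges_wheelGraph_adj_some_none.2 hx⟩
  calc _ ≤ (insert none (some '' R)).ncard := totalDominationNumber_le_ncard hS
    _ ≤ (some '' R).ncard + 1 := Set.ncard_insert_le _ _
    _ = R.ncard + 1 := by rw [Set.ncard_image_of_injective _ (Option.some_injective _)]

theorem ncard_preimage_wheelSpoke_le (F : Set (Sym2 (Option (Fin n)))) :
    (wheelSpoke ⁻¹' F).ncard ≤ F.ncard := by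
  rw [← Set.ncard_image_of_injective _ wheelSpoke_injective]
  exact Set.ncard_le_ncard (Set.image_preimage_subset _ _)

theorem ncard_preimage_wheelSpoke_add_one_le {F : Set (Sym2 (Option (Fin n)))}
    {x y : Fin n} (hxy : s(some x, some y) ∈ F) :
    (wheelSpoke ⁻¹' F).ncard + 1 ≤ F.ncard := by
  rw [← Set.ncard_image_of_injective _ wheelSpoke_injective,
    ← Set.ncard_insert_of_notMem (a := s(some x, some y)) (by simp [wheelSpoke])]
  exact Set.ncard_le_ncard (Set.insert_subset hxy (Set.image_preimage_subset _ _))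

theorem totalDominationNumber_deleteEdges_wheelGraph_le_two (hn : 0 < n)
    {F : Set (Sym2 (Option (Fin n)))} (hF : wheelSpoke ⁻¹' F = ∅) :
    totalDominationNumber ((wheelGraph n).deleteEdges F) ≤ 2 := by
  simpa using totalDominationNumber_deleteEdges_wheelGraph_le_of_dominating (F := F)
    (R := {⟨0, hn⟩}) ⟨_, rfl, fun h => hF.subset h⟩ fun _ hd => (hF.subset hd).elim

theorem totalDominationNumber_deleteEdges_wheelGraph_le_ncard_add_one (hn : 2 ≤ n)
    {F : Set (Sym2 (Option (Fin n)))} (hF : NoIsolatedVerts ((wheelGraph n).deleteEdges F))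
    (hD : (wheelSpoke ⁻¹' F).Nonempty) :
    totalDominationNumber ((wheelGraph n).deleteEdges F) ≤ F.ncard + 1 := by
  have : NeZero n := ⟨by omega⟩
  set D := wheelSpoke ⁻¹' F
  obtain ⟨p, hp⟩ : ∃ p, p ∉ D := by
    obtain ⟨_ | p, hp⟩ := hF none
    · exact absurd hp (SimpleGraph.irrefl _)
    · exact ⟨p, deleteEdges_wheelGraph_adj_some_none.1 hp.symm⟩
  have hrim : ∀ d ∈ D, ∃ r, ((wheelGraph n).deleteEdges F).Adj (some d) (some r) := by
    intro d hd
    obtain ⟨_ | r, hr⟩ := hF (some d)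
    · exact absurd hd (deleteEdges_wheelGraph_adj_some_none.1 hr)
    · exact ⟨r, hr⟩
  choose! c hc using hrim
  obtain ⟨j, hj, hj1⟩ := Fin.exists_mem_add_one_notMem hD fun h => hp (h ▸ trivial)
  by_cases hjF : s(some j, some (j + 1)) ∈ F
  · have := totalDominationNumber_deleteEdges_wheelGraph_le_of_dominating
      (R := insert p (c '' D)) ⟨p, Set.mem_insert _ _, hp⟩
      fun d hd => ⟨c d, Set.mem_insert_of_mem _ (Set.mem_image_of_mem c hd), hc d hd⟩
    have := Set.ncard_insert_le p (c '' D)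
    have := Set.ncard_image_le (f := c) (s := D)
    have : D.ncard + 1 ≤ F.ncard := ncard_preimage_wheelSpoke_add_one_le hjF
    omega
  · have := totalDominationNumber_deleteEdges_wheelGraph_le_of_dominating
      (R := insert (j + 1) (c '' (D \ {j}))) ⟨j + 1, Set.mem_insert _ _, hj1⟩ fun d hd => by
        by_cases hdj : d = j
        · subst hdj
          exact ⟨d + 1, Set.mem_insert _ _, deleteEdges_adj.2
            ⟨wheelGraph_adj_some_some.2 (cycleGraph_adj_add_one hn d), hjF⟩⟩
        · exact ⟨c d, Set.mem_insert_of_mem _ (Set.mem_image_of_mem c ⟨hd, hdj⟩), hc d hd⟩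
    have := Set.ncard_insert_le (j + 1) (c '' (D \ {j}))
    have := Set.ncard_image_le (f := c) (s := D \ {j})
    have := Set.ncard_sdiff_singleton_add_one hj
    have : D.ncard ≤ F.ncard := ncard_preimage_wheelSpoke_le F
    omega

theorem totalDominationNumber_deleteEdges_wheelGraph_le (hn : 2 ≤ n)
    {F : Set (Sym2 (Option (Fin n)))} (hF : NoIsolatedVerts ((wheelGraph n).deleteEdges F)) :
    totalDominationNumber ((wheelGraph n).deleteEdges F) ≤ max 2 (F.ncard + 1) := by
  rcases (wheelSpoke ⁻¹' F).eq_empty_or_nonempty with hD | hD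
  · exact (totalDominationNumber_deleteEdges_wheelGraph_le_two (by omega) hD).trans
      (le_max_left _ _)
  · exact (totalDominationNumber_deleteEdges_wheelGraph_le_ncard_add_one hn hF hD).trans
      (le_max_right _ _)

end

/-- For `k ≥ 2` and `n ≥ 3k`, the `(k−1)`-total bondage number of the wheel
graph `W_n` equals `k`. -/
theorem kTotalBondage_wheelGraph (k n : ℕ) (hk : 2 ≤ k) (hn : 3 * k ≤ n) :
    kTotalBondage (wheelGraph n) (k - 1) = k := by
  rw [kTotalBondage, totalDominationNumber_wheelGraph (by omega)]
  let f : Fin k → Fin n := fun i => ⟨3 * i + 1, by omega⟩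
  have hf : ∀ i, (f i).val = 3 * i + 1 := fun _ => rfl
  have hf_inj : Function.Injective f := fun i j h => Fin.ext (by simpa [f] using h)
  have hD : Set.range f ≠ Set.univ := fun h => by
    obtain ⟨i, hi⟩ := h.symm ▸ Set.mem_univ (⟨0, by omega⟩ : Fin n)
    exact absurd (congrArg Fin.val hi) (by simp [f])
  have hiso := noIsolatedVerts_deleteEdges_wheelSpoke_image (by omega) hD
  refine IsLeast.csInf_eq ⟨⟨wheelSpoke '' Set.range f, ?_, ?_, hiso, ?_⟩, ?_⟩
  · exact Set.image_subset_iff.2 fun x _ => wheelSpoke_mem_edgeSet x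
  · rw [Set.ncard_image_of_injective _ wheelSpoke_injective, Set.ncard_range_of_injective hf_inj,
      Nat.card_eq_fintype_card, Fintype.card_fin]
  · refine le_totalDominationNumber hiso fun S hS => ?_
    have := add_one_le_ncard_of_isTotalDominatingSet_deleteEdges_wheelSpoke hk hn hf hS
    omega
  · rintro m ⟨F, -, rfl, hF, hγ⟩
    have := totalDominationNumber_deleteEdges_wheelGraph_le (by omega) hF
    omega
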